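/- arXiv:2403.00023 — 4 statements merged into one kernel-verified Lean document; each statement's English description precedes it below -/
import Mathlib

section
/- Correctness of Paillier decryption: let p₁, p₂ be distinct odd primes, n = p₁p₂, h = n+1, τ = lcm(p₁−1, p₂−1). Define L(x) = (x−1)/n for x ≡ 1 (mod n). Then for any m ∈ ZMod n and any ρ coprime to n, letting CT = ρ^n h^m mod n², we have CT^τ ≡ 1 + (m·τ)·n (mod n²), and hence L(CT^τ mod n²) ≡ m·τ (mod n), so L(CT^τ mod n²) · τ⁻¹ ≡ m (mod n). -/
lemma units_pow_eq_one_aux {a b N : ℕ} (ha : a ≠ 0) (hb : b ≠ 0)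
    (hab : Nat.Coprime a b) (hN : N = a * b) (k : ℕ)
    (hka : a.totient ∣ k) (hkb : b.totient ∣ k) (u : (ZMod N)ˣ) : u ^ k = 1 := by
  subst hN
  haveI : NeZero a := ⟨ha⟩
  haveI : NeZero b := ⟨hb⟩
  haveI : NeZero (a * b) := ⟨mul_ne_zero ha hb⟩
  apply Units.ext
  rw [Units.val_pow_eq_pow_val, Units.val_one]
  let e := ZMod.chineseRemainder hab
  apply e.injective
  rw [map_pow, map_one]
  have h1 : IsUnit (e (u : ZMod (a * b))).1 :=
    (u.isUnit.map e.toRingHom).map (RingHom.fst _ _)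
  have h2 : IsUnit (e (u : ZMod (a * b))).2 :=
    (u.isUnit.map e.toRingHom).map (RingHom.snd _ _)
  obtain ⟨v1, hv1⟩ := h1
  obtain ⟨v2, hv2⟩ := h2
  have : (e (u : ZMod (a*b))) = ((v1 : ZMod a), (v2 : ZMod b)) := by
    ext
    · exact hv1.symm
    · exact hv2.symm
  rw [this, Prod.pow_mk, Prod.mk_eq_one]
  constructor
  · obtain ⟨c, hc⟩ := hka
    rw [← Units.val_pow_eq_pow_val, hc, pow_mul, ZMod.pow_totient, one_pow, Units.val_one]
  · obtain ⟨c, hc⟩ := hkb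
    rw [← Units.val_pow_eq_pow_val, hc, pow_mul, ZMod.pow_totient, one_pow, Units.val_one]

lemma succ_pow_aux (n k : ℕ) :
    ((n + 1 : ℕ) : ZMod (n ^ 2)) ^ k = 1 + (k : ZMod (n ^ 2)) * (n : ZMod (n ^ 2)) := by
  have h0 : (n : ZMod (n ^ 2)) * (n : ZMod (n ^ 2)) = 0 := by
    rw [← Nat.cast_mul, ← pow_two]
    exact ZMod.natCast_self _
  induction k with
  | zero => simp
  | succ k ih =>
      have hps : ((n + 1 : ℕ) : ZMod (n ^ 2)) ^ (k + 1)
          = ((n + 1 : ℕ) : ZMod (n ^ 2)) ^ k * ((n + 1 : ℕ) : ZMod (n ^ 2)) := pow_succ _ _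
      rw [hps, ih]
      push_cast
      linear_combination (k : ZMod (n ^ 2)) * h0

/-- Correctness of Paillier decryption. With `n = p₁p₂`, `τ = lcm(p₁-1, p₂-1)` coprime to `n`,
    ciphertext `CT = ρ^n (n+1)^m`, we have `CT^τ ≡ 1 + mτn (mod n²)`,
    `L(CT^τ) ≡ mτ (mod n)` and `L(CT^τ)·τ⁻¹ ≡ m (mod n)`, where `L(x) = (x-1)/n`. -/
theorem paillier_decryption_correct (p₁ p₂ : ℕ) (hp₁ : p₁.Prime) (hp₂ : p₂.Prime)
    (hne : p₁ ≠ p₂) (hodd₁ : Odd p₁) (hodd₂ : Odd p₂)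
    (n : ℕ) (hn : n = p₁ * p₂) (τ : ℕ) (hτ : τ = Nat.lcm (p₁ - 1) (p₂ - 1))
    (hτn : Nat.Coprime τ n) (hcop : Nat.Coprime (n + 1) (n ^ 2))
    (m : ZMod n) (ρ : (ZMod (n ^ 2))ˣ)
    (CT : (ZMod (n ^ 2))ˣ)
    (hCT : CT = ρ ^ n * ZMod.unitOfCoprime (n + 1) hcop ^ m.val) :
    ((CT ^ τ : (ZMod (n ^ 2))ˣ) : ZMod (n ^ 2))
        = 1 + ((m.val * τ : ℕ) : ZMod (n ^ 2)) * (n : ZMod (n ^ 2)) ∧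
      ((((CT ^ τ : (ZMod (n ^ 2))ˣ) : ZMod (n ^ 2)).val - 1) / n : ZMod n) = m * τ ∧
      ((((CT ^ τ : (ZMod (n ^ 2))ˣ) : ZMod (n ^ 2)).val - 1) / n : ZMod n) * (τ : ZMod n)⁻¹
        = m := by
  have h2n : 2 ≤ n := by
    have := hp₁.two_le
    have := hp₂.two_le
    nlinarith [hn]
  haveI : NeZero n := ⟨by omega⟩
  haveI : NeZero (n ^ 2) := ⟨pow_ne_zero 2 (by omega)⟩
  -- ρ ^ (n * τ) = 1
  have hn2 : n ^ 2 = p₁ ^ 2 * p₂ ^ 2 := by rw [hn, mul_pow]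
  have hcp : Nat.Coprime (p₁ ^ 2) (p₂ ^ 2) :=
    Nat.Coprime.pow 2 2 ((Nat.coprime_primes hp₁ hp₂).mpr hne)
  have ht1 : (p₁ ^ 2).totient ∣ n * τ := by
    have : (p₁ ^ 2).totient = p₁ * (p₁ - 1) := by
      rw [Nat.totient_prime_pow hp₁ (by norm_num)]; norm_num
    rw [this]
    exact mul_dvd_mul (hn ▸ dvd_mul_right p₁ p₂) (hτ ▸ Nat.dvd_lcm_left _ _)
  have ht2 : (p₂ ^ 2).totient ∣ n * τ := by
    have : (p₂ ^ 2).totient = p₂ * (p₂ - 1) := by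
      rw [Nat.totient_prime_pow hp₂ (by norm_num)]; norm_num
    rw [this]
    exact mul_dvd_mul (hn ▸ dvd_mul_left p₂ p₁) (hτ ▸ Nat.dvd_lcm_right _ _)
  have hρ : ρ ^ (n * τ) = 1 :=
    units_pow_eq_one_aux (pow_ne_zero 2 hp₁.pos.ne') (pow_ne_zero 2 hp₂.pos.ne')
      hcp hn2 (n * τ) ht1 ht2 ρ
  -- first part
  set a : ℕ := m.val * τ with ha
  have hmain : ((CT ^ τ : (ZMod (n ^ 2))ˣ) : ZMod (n ^ 2))
      = 1 + ((a : ℕ) : ZMod (n ^ 2)) * (n : ZMod (n ^ 2)) := by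
    rw [hCT, mul_pow, ← pow_mul, ← pow_mul, hρ, one_mul, Units.val_pow_eq_pow_val,
      ZMod.coe_unitOfCoprime, succ_pow_aux]
  -- compute the val
  have hx : ((CT ^ τ : (ZMod (n ^ 2))ˣ) : ZMod (n ^ 2)) = ((1 + a * n : ℕ) : ZMod (n ^ 2)) := by
    rw [hmain]; push_cast; ring
  have hr : a % n < n := Nat.mod_lt _ (by omega)
  have hlt : 1 + (a % n) * n < n ^ 2 := by
    have h1 : (a % n + 1) * n ≤ n * n := Nat.mul_le_mul_right n (Nat.succ_le_of_lt hr)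
    have h2 : n ^ 2 = n * n := sq n
    nlinarith
  have hval : ((CT ^ τ : (ZMod (n ^ 2))ˣ) : ZMod (n ^ 2)).val = 1 + (a % n) * n := by
    rw [hx, ZMod.val_natCast]
    have hdm : a = n * (a / n) + a % n := (Nat.div_add_mod a n).symm
    have : 1 + a * n = 1 + (a % n) * n + (a / n) * n ^ 2 := by
      rw [sq]
      nlinarith [hdm]
    rw [this, Nat.add_mul_mod_self_right, Nat.mod_eq_of_lt hlt]
  have hL : (((CT ^ τ : (ZMod (n ^ 2))ˣ) : ZMod (n ^ 2)).val - 1) / n = a % n := by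
    rw [hval]
    simp [Nat.mul_div_cancel _ (show 0 < n by omega)]
  have hg2 : ((((CT ^ τ : (ZMod (n ^ 2))ˣ) : ZMod (n ^ 2)).val - 1) / n : ZMod n) = m * τ := by
    rw [hL, ZMod.natCast_mod, ha, Nat.cast_mul, ZMod.natCast_val, ZMod.cast_id]
  refine ⟨hmain, hg2, ?_⟩
  rw [hg2, mul_assoc, ZMod.mul_inv_of_unit, mul_one]
  exact ⟨ZMod.unitOfCoprime τ hτn, ZMod.coe_unitOfCoprime τ hτn⟩
end

section
/- Correctness of CP-ABE final decryption: in prime-order groups with bilinear map e and generator g, for exponents α, β, r, s ∈ ZMod p with β ≠ 0, and any group element M ∈ G_T, letting C̃ = M · e(g,g)^{αs}, C = (g^β)^s, S = g^{(α+r)/β}, and D = e(g,g)^{rs}, we have C̃ · D / e(C, S) = M. -/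
/-! Bilinearity turns `e(C, S)` into `e(g,g)` raised to `β·s·((α+r)β⁻¹)`, and the numerator
carries `e(g,g)^(αs + rs)`. Since `e(g,g)^p = 1`, exponents only matter modulo `p`, and in
`ZMod p` the factor `β` cancels. -/

theorem pow_eq_pow_of_natCast_eq {G : Type*} [Monoid G] {p : ℕ} {x : G} (hx : x ^ p = 1)
    {a b : ℕ} (hab : (a : ZMod p) = b) : x ^ a = x ^ b := by
  rw [pow_eq_pow_mod a hx, pow_eq_pow_mod b hx, (ZMod.natCast_eq_natCast_iff' a b p).1 hab]

theorem cpabe_final_decryption_general (p : ℕ) [Fact p.Prime] (G₁ GT : Type*)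
    [CommGroup G₁] [CommGroup GT]
    (hT : ∀ x : GT, x ^ p = 1)
    (g : G₁) (e : G₁ → G₁ → GT)
    (hpow : ∀ (u v : G₁) (a b : ℕ), e (u ^ a) (v ^ b) = (e u v) ^ (a * b))
    (α β r s : ZMod p) (hβ : β ≠ 0) (M : GT) :
    (M * (e g g) ^ (α * s).val) * (e g g) ^ (r * s).val /
        e ((g ^ β.val) ^ s.val) (g ^ ((α + r) * β⁻¹).val) = M := by
  have hexp : ((β.val * s.val * ((α + r) * β⁻¹).val : ℕ) : ZMod p) =
      ((α * s).val + (r * s).val : ℕ) := by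
    push_cast [ZMod.natCast_val, ZMod.cast_id]
    field_simp
  rw [← pow_mul, hpow, pow_eq_pow_of_natCast_eq (hT _) hexp, pow_add, mul_assoc,
    mul_div_cancel_right]

/-- Correctness of CP-ABE final decryption: with `C̃ = M·e(g,g)^{αs}`, `C = (g^β)^s`,
    `S = g^{(α+r)/β}`, `D = e(g,g)^{rs}`, we have `C̃ · D / e(C,S) = M`.
    Exponents live in `ZMod p` (exponentiation via `.val`), `β ≠ 0`. -/
theorem cpabe_final_decryption (p : ℕ) [Fact p.Prime] (G₁ GT : Type*)
    [CommGroup G₁] [CommGroup GT]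
    (hG : ∀ x : G₁, x ^ p = 1) (hT : ∀ x : GT, x ^ p = 1)
    (g : G₁) (e : G₁ → G₁ → GT)
    (hpow : ∀ (u v : G₁) (a b : ℕ), e (u ^ a) (v ^ b) = (e u v) ^ (a * b))
    (α β r s : ZMod p) (hβ : β ≠ 0) (M : GT) :
    (M * (e g g) ^ (α * s).val) * (e g g) ^ (r * s).val /
        e ((g ^ β.val) ^ s.val) (g ^ ((α + r) * β⁻¹).val) = M :=
  cpabe_final_decryption_general p G₁ GT hT g e hpow α β r s hβ M
end

section
/- If x is an n-th residue modulo n² (i.e., x = ρ^n mod n² for some unit ρ), then x^τ ≡ 1 (mod n²), where τ = lcm(p₁−1, p₂−1) and n = p₁p₂ with p₁ ≠ p₂ prime. Consequently L(x^τ mod n²) ≡ 0 (mod n), so Paillier decryption of a ciphertext of 0 returns 0. -/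
lemma paillier_unit_pow_helper (p m : ℕ) (hp : p.Prime) (hd : p * (p - 1) ∣ m)
    (x : ZMod (p ^ 2)) (hx : IsUnit x) : x ^ m = 1 := by
  obtain ⟨u, rfl⟩ := hx
  haveI : Fact p.Prime := ⟨hp⟩
  haveI : NeZero (p ^ 2) := ⟨pow_ne_zero _ hp.ne_zero⟩
  rw [← Units.val_pow_eq_pow_val, ← Units.val_one]
  congr 1
  apply orderOf_dvd_iff_pow_eq_one.mp
  refine dvd_trans orderOf_dvd_card ?_
  rw [ZMod.card_units_eq_totient, Nat.totient_prime_pow hp (by norm_num)]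
  simpa using hd

/-- Encryptions of zero decrypt to zero: for an `n`-th residue `x = ρ^n` modulo `n²`,
    `x^τ = 1`, and hence `L(x^τ) ≡ 0 (mod n)` where `L(y) = (y-1)/n`. -/
theorem paillier_zero_decrypts_to_zero (p₁ p₂ : ℕ) (hp₁ : p₁.Prime) (hp₂ : p₂.Prime)
    (hne : p₁ ≠ p₂) (n : ℕ) (hn : n = p₁ * p₂)
    (τ : ℕ) (hτ : τ = Nat.lcm (p₁ - 1) (p₂ - 1)) (ρ : (ZMod (n ^ 2))ˣ) :
    ((ρ ^ n) ^ τ = 1) ∧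
      ((((((ρ ^ n) ^ τ : (ZMod (n ^ 2))ˣ) : ZMod (n ^ 2)).val - 1) / n : ZMod n) = 0) := by
  have hp1 := hp₁.two_le
  have hp2 := hp₂.two_le
  have key : (ρ ^ n) ^ τ = 1 := by
    rw [← pow_mul]
    ext
    rw [Units.val_pow_eq_pow_val, Units.val_one]
    have hco : Nat.Coprime (p₁ ^ 2) (p₂ ^ 2) :=
      Nat.Coprime.pow _ _ ((Nat.coprime_primes hp₁ hp₂).mpr hne)
    have hsq : n ^ 2 = p₁ ^ 2 * p₂ ^ 2 := by rw [hn]; ring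
    let e : ZMod (n ^ 2) ≃+* ZMod (p₁ ^ 2) × ZMod (p₂ ^ 2) :=
      (ZMod.ringEquivCongr hsq).trans (ZMod.chineseRemainder hco)
    apply e.injective
    rw [map_pow, map_one]
    have hu : IsUnit (e (ρ : ZMod (n ^ 2))) := ρ.isUnit.map e
    have h1 : p₁ * (p₁ - 1) ∣ n * τ := by
      rw [hn, hτ]
      exact mul_dvd_mul ⟨p₂, rfl⟩ (Nat.dvd_lcm_left _ _)
    have h2 : p₂ * (p₂ - 1) ∣ n * τ := by
      rw [hn, hτ]
      exact mul_dvd_mul ⟨p₁, Nat.mul_comm _ _⟩ (Nat.dvd_lcm_right _ _)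
    have hu1 : IsUnit (e (ρ : ZMod (n ^ 2))).1 := hu.map (RingHom.fst _ _)
    have hu2 : IsUnit (e (ρ : ZMod (n ^ 2))).2 := hu.map (RingHom.snd _ _)
    ext
    · rw [Prod.pow_fst, Prod.fst_one]
      exact paillier_unit_pow_helper p₁ _ hp₁ h1 _ hu1
    · rw [Prod.pow_snd, Prod.snd_one]
      exact paillier_unit_pow_helper p₂ _ hp₂ h2 _ hu2
  refine ⟨key, ?_⟩
  rw [key]
  haveI : Fact (1 < n ^ 2) := ⟨by subst hn; have h4 : 4 ≤ p₁ * p₂ := Nat.mul_le_mul hp1 hp2; nlinarith⟩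
  rw [Units.val_one, ZMod.val_one, Nat.sub_self, Nat.zero_div, Nat.cast_zero]
end

section
/- In the CP-ABE access tree, if each non-root node x satisfies l_x(0) = l_{parent(x)}(index(x)) where each l_y is a polynomial over ZMod p assigned to node y, and the root polynomial satisfies l_R(0) = s, then for any node x whose children's values D_y = e(g,g)^{r·l_x(index(y))} are known for a set of children Y_x of size equal to the threshold (degree of l_x plus 1), the Lagrange-weighted product Π_{y∈Y_x} D_y^{Δ} equals e(g,g)^{r·l_x(0)}. Applying this recursively from leaves to root yields e(g,g)^{rs}. -/
/-!
Lagrange interpolation at `0` writes `l(0)` as the `Δ`-weighted sum of the `q` values `l(k)`,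
and since `t ^ p = 1`, the map `a ↦ t ^ a.val` turns sums and products in `ZMod p` into
products and powers in `G_T`.
-/

open Finset Polynomial

theorem pow_eq_pow_of_natCast_eq_s17 {M : Type*} [Monoid M] {t : M} {n a b : ℕ} (ht : t ^ n = 1)
    (h : (a : ZMod n) = b) : t ^ a = t ^ b := by
  have hab : a % orderOf t = b % orderOf t :=
    ((ZMod.natCast_eq_natCast_iff a b n).1 h).of_dvd (orderOf_dvd_of_pow_eq_one ht)
  rw [← pow_mod_orderOf, hab, pow_mod_orderOf]

theorem prod_pow_val_pow_val {M : Type*} [CommMonoid M] {t : M} {n : ℕ} [NeZero n]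
    (ht : t ^ n = 1) {ι : Type*} (S : Finset ι) (a b : ι → ZMod n) :
    ∏ k ∈ S, (t ^ (a k).val) ^ (b k).val = t ^ (∑ k ∈ S, a k * b k).val := by
  simp_rw [← pow_mul, prod_pow_eq_pow_sum]
  exact pow_eq_pow_of_natCast_eq_s17 ht (by push_cast [ZMod.natCast_val, ZMod.cast_id']; rfl)

theorem Lagrange.eval_eq_sum_mul_prod_div {F : Type*} [Field F] [DecidableEq F] {f : F[X]}
    {s : Finset F} (hf : f.degree < #s) (x : F) :
    f.eval x = ∑ k ∈ s, f.eval k * ∏ j ∈ s.erase k, (x - j) / (k - j) := by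
  conv_lhs => rw [Lagrange.eq_interpolate (v := id) (Set.injOn_id _) hf]
  simp [Lagrange.interpolate_apply, eval_finsetSum, Lagrange.basis, eval_prod,
    Lagrange.basisDivisor, div_eq_inv_mul]

theorem cpabe_tree_recombination_general (p : ℕ) [Fact p.Prime] (GT : Type*) [CommGroup GT]
    (hcard : Nat.card GT = p) (t : GT) (q : ℕ)
    (l : Polynomial (ZMod p)) (hdeg : l.degree < q)
    (Y' : Finset (ZMod p)) (hY : Y'.card = q)
    (r s : ZMod p) (hroot : l.eval 0 = s) :
    (∏ k ∈ Y', (t ^ (r * l.eval k).val) ^ ((∏ j ∈ Y'.erase k, (0 - j) / (k - j)).val))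
      = t ^ (r * l.eval 0).val ∧
    (∏ k ∈ Y', (t ^ (r * l.eval k).val) ^ ((∏ j ∈ Y'.erase k, (0 - j) / (k - j)).val))
      = t ^ (r * s).val := by
  have htp : t ^ p = 1 := hcard ▸ pow_card_eq_one'
  have hrecomb : (∏ k ∈ Y', (t ^ (r * l.eval k).val) ^
      ((∏ j ∈ Y'.erase k, (0 - j) / (k - j)).val)) = t ^ (r * l.eval 0).val := by
    rw [prod_pow_val_pow_val htp, Lagrange.eval_eq_sum_mul_prod_div (hY ▸ hdeg) 0, mul_sum]
    simp_rw [mul_assoc]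
  exact ⟨hrecomb, hroot ▸ hrecomb⟩

/-- CP-ABE node recombination: if the node's polynomial `l` has degree `< q` and the
    children's values are `D_y = t^{r·l(index y)}` for a set `Y'` of `q` distinct nonzero
    indices, then the Lagrange-weighted product of the `D_y` equals `t^{r·l(0)}`;
    in particular, at the root where `l(0) = s`, this yields `t^{rs}` (`t = e(g,g)`). -/
theorem cpabe_tree_recombination (p : ℕ) [Fact p.Prime] (GT : Type*) [CommGroup GT]
    (hcard : Nat.card GT = p) (t : GT) (q : ℕ)
    (l : Polynomial (ZMod p)) (hdeg : l.degree < q)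
    (Y' : Finset (ZMod p)) (hY : Y'.card = q) (h0 : (0 : ZMod p) ∉ Y')
    (r s : ZMod p) (hroot : l.eval 0 = s) :
    (∏ k ∈ Y', (t ^ (r * l.eval k).val) ^ ((∏ j ∈ Y'.erase k, (0 - j) / (k - j)).val))
      = t ^ (r * l.eval 0).val ∧
    (∏ k ∈ Y', (t ^ (r * l.eval k).val) ^ ((∏ j ∈ Y'.erase k, (0 - j) / (k - j)).val))
      = t ^ (r * s).val :=
  cpabe_tree_recombination_general p GT hcard t q l hdeg Y' hY r s hroot
end
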